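/- Let z₁, z₂, ζ_α, ζ_β ∈ ℂ be pairwise distinct, L₀ an invertible n×n complex matrix, a₁, a₂, c_α, c_β ∈ ℂⁿ and b₁†, b₂†, d_α†, d_β† row vectors with d_α†a₁ ≠ 0, b₂†c_β ≠ 0 and a₁ ≠ 0. Define L(z) = L₀ + a₁b₁†/(z − z₁) + a₂b₂†/(z − z₂), M(z) = L₀⁻¹ − c_αd_α†/(z − ζ_α) − c_βd_β†/(z − ζ_β), B₁(z) = I + ((z₁ − ζ_α)/(z − z₁))·(L₀⁻¹a₁)(d_α†L₀)/(d_α†a₁), B₂(z) = I + ((z₂ − ζ_β)/(z − z₂))·(c_β b₂†)/(b₂†c_β). Assume L(z) = L₀·B₁(z)·B₂(z) for all z ∉ {z₁, z₂}, and L(z)·M(z) = M(z)·L(z) = I for all z ∉ {z₁, z₂, ζ_α, ζ_β}. If d_α† ≠ 0, then there exists t ∈ ℂ such that B₂(ζ_α)·c_α = t·L₀⁻¹a₁; that is, B₂(ζ_α)·c_α is proportional to L₀⁻¹a₁. -/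
import Mathlib


open Matrix Filter Topology

lemma vecMulVec_mulVec' {n : ℕ} (u v w : Fin n → ℂ) :
    (vecMulVec u v).mulVec w = (v ⬝ᵥ w) • u := by
  ext i
  simp only [vecMulVec, mulVec, dotProduct, Pi.smul_apply, of_apply, smul_eq_mul,
    Finset.sum_mul]
  exact Finset.sum_congr rfl fun j _ => by ring

/-- For a quadratic Lax matrix with inverse `M(z)` in additive form and
factorization `L(z) = L₀·B₁(z)·B₂(z)`, one has `B₂(ζ_α)·c_α ∼ L₀⁻¹a₁`. -/
theorem quadratic_lax_cα_relation (n : ℕ) (z₁ z₂ ζα ζβ : ℂ)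
    (hdist : ([z₁, z₂, ζα, ζβ] : List ℂ).Pairwise (· ≠ ·))
    (L₀ : Matrix (Fin n) (Fin n) ℂ) (hL₀ : IsUnit L₀)
    (a₁ a₂ cα cβ b₁ b₂ dα dβ : Fin n → ℂ)
    (hda : dα ⬝ᵥ a₁ ≠ 0) (hbc : b₂ ⬝ᵥ cβ ≠ 0) (ha₁ : a₁ ≠ 0)
    (L M : ℂ → Matrix (Fin n) (Fin n) ℂ)
    (hL : ∀ z, L z = L₀ + (z - z₁)⁻¹ • vecMulVec a₁ b₁ +
        (z - z₂)⁻¹ • vecMulVec a₂ b₂)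
    (hM : ∀ z, M z = L₀⁻¹ - (z - ζα)⁻¹ • vecMulVec cα dα -
        (z - ζβ)⁻¹ • vecMulVec cβ dβ)
    (B₁ B₂ : ℂ → Matrix (Fin n) (Fin n) ℂ)
    (hB₁ : ∀ z, B₁ z = 1 + (((z₁ - ζα) / (z - z₁)) / (dα ⬝ᵥ a₁)) •
        vecMulVec (L₀⁻¹.mulVec a₁) (Matrix.vecMul dα L₀))
    (hB₂ : ∀ z, B₂ z = 1 + (((z₂ - ζβ) / (z - z₂)) / (b₂ ⬝ᵥ cβ)) •
        vecMulVec cβ b₂)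
    (hfact : ∀ z, z ≠ z₁ → z ≠ z₂ → L z = L₀ * B₁ z * B₂ z)
    (hinv : ∀ z, z ≠ z₁ → z ≠ z₂ → z ≠ ζα → z ≠ ζβ →
      L z * M z = 1 ∧ M z * L z = 1)
    (hdα : dα ≠ 0) :
    ∃ t : ℂ, (B₂ ζα).mulVec cα = t • L₀⁻¹.mulVec a₁ := by
  -- extract distinctness facts
  simp only [List.pairwise_cons] at hdist
  have h12 : z₁ ≠ z₂ := hdist.1 z₂ (by simp)
  have h1α : ζα ≠ z₁ := fun h => (hdist.1 ζα (by simp)) h.symm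
  have h2α : ζα ≠ z₂ := fun h => (hdist.2.1 ζα (by simp)) h.symm
  have hαβ : ζα ≠ ζβ := hdist.2.2.1 ζβ (by simp)
  -- Step 1: residue argument to show L(ζα) * (cα dα†) = 0
  set N : ℂ → Matrix (Fin n) (Fin n) ℂ := fun z =>
    (z - ζα) • L₀⁻¹ - vecMulVec cα dα - ((z - ζα) * (z - ζβ)⁻¹) • vecMulVec cβ dβ with hN
  have hLcont : ContinuousAt L ζα := by
    have : L = fun z => L₀ + (z - z₁)⁻¹ • vecMulVec a₁ b₁ +
        (z - z₂)⁻¹ • vecMulVec a₂ b₂ := funext hL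
    rw [this]
    exact (continuousAt_const.add
      (((continuousAt_id.sub continuousAt_const).inv₀ (sub_ne_zero.2 h1α)).smul
        continuousAt_const)).add
      (((continuousAt_id.sub continuousAt_const).inv₀ (sub_ne_zero.2 h2α)).smul
        continuousAt_const)
  have hNcont : ContinuousAt N ζα := by
    exact (((continuousAt_id.sub continuousAt_const).smul continuousAt_const).sub
      continuousAt_const).sub
      (((continuousAt_id.sub continuousAt_const).mul
        ((continuousAt_id.sub continuousAt_const).inv₀ (sub_ne_zero.2 hαβ))).smul
        continuousAt_const)
  have hGcont : ContinuousAt (fun z => L z * N z) ζα := hLcont.mul hNcont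
  -- eventual equality on the punctured neighborhood
  have hev : (fun z => L z * N z) =ᶠ[𝓝[≠] ζα] (fun z => (z - ζα) • (1 : Matrix (Fin n) (Fin n) ℂ)) := by
    have e1 : ∀ᶠ z in 𝓝[≠] ζα, z ≠ z₁ := eventually_ne_nhdsWithin h1α
    have e2 : ∀ᶠ z in 𝓝[≠] ζα, z ≠ z₂ := eventually_ne_nhdsWithin h2α
    have eβ : ∀ᶠ z in 𝓝[≠] ζα, z ≠ ζβ := eventually_ne_nhdsWithin hαβ
    have eα : ∀ᶠ z in 𝓝[≠] ζα, z ≠ ζα := eventually_mem_nhdsWithin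
    filter_upwards [e1, e2, eα, eβ] with z hz1 hz2 hzα hzβ
    have hNM : N z = (z - ζα) • M z := by
      rw [hM z, hN]
      simp only [smul_sub, smul_smul]
      rw [mul_inv_cancel₀ (sub_ne_zero.2 hzα), one_smul]
    rw [hNM, Matrix.mul_smul, (hinv z hz1 hz2 hzα hzβ).1]
  -- limits
  have hlim2 : Tendsto (fun z : ℂ => (z - ζα) • (1 : Matrix (Fin n) (Fin n) ℂ))
      (𝓝[≠] ζα) (𝓝 0) := by
    have h0 : Tendsto (fun z : ℂ => (z - ζα) • (1 : Matrix (Fin n) (Fin n) ℂ))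
        (𝓝 ζα) (𝓝 0) := by
      have hc : ContinuousAt (fun z : ℂ => (z - ζα) • (1 : Matrix (Fin n) (Fin n) ℂ)) ζα :=
        (continuousAt_id.sub continuousAt_const).smul continuousAt_const
      simpa using hc.tendsto
    exact h0.mono_left nhdsWithin_le_nhds
  have hlim1 : Tendsto (fun z => L z * N z) (𝓝[≠] ζα) (𝓝 (L ζα * N ζα)) :=
    hGcont.continuousWithinAt
  have hG0 : L ζα * N ζα = 0 :=
    tendsto_nhds_unique (hlim1.congr' hev) hlim2
  have hNα : N ζα = -vecMulVec cα dα := by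
    rw [hN]; simp
  have hLcd : L ζα * vecMulVec cα dα = 0 := by
    rw [hNα] at hG0
    have := hG0
    rw [Matrix.mul_neg, neg_eq_zero] at this
    exact this
  -- Step 2: L(ζα) cα = 0
  obtain ⟨j, hj⟩ : ∃ j, dα j ≠ 0 := Function.ne_iff.1 hdα
  have hLcα : (L ζα).mulVec cα = 0 := by
    funext i
    have := congrFun (congrFun hLcd i) j
    simp only [Matrix.mul_apply, vecMulVec_apply, Matrix.zero_apply] at this
    have h2 : (∑ k, L ζα i k * cα k) * dα j = 0 := by
      rw [Finset.sum_mul]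
      simpa [mul_assoc] using this
    have h3 : (∑ k, L ζα i k * cα k) = 0 := by
      rcases mul_eq_zero.1 h2 with h | h
      · exact h
      · exact absurd h hj
    simpa [mulVec, dotProduct] using h3
  -- Step 3: use factorization
  have hdet : IsUnit L₀.det := (Matrix.isUnit_iff_isUnit_det L₀).1 hL₀
  have hfα := hfact ζα h1α h2α
  set w : Fin n → ℂ := (B₂ ζα).mulVec cα with hw
  have hB1w : (B₁ ζα).mulVec w = 0 := by
    have h1 : (L₀ * B₁ ζα * B₂ ζα).mulVec cα = 0 := by rw [← hfα]; exact hLcα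
    have h2 : L₀.mulVec ((B₁ ζα).mulVec w) = 0 := by
      rw [hw, mulVec_mulVec, mulVec_mulVec]
      exact h1
    have h3 := congrArg (L₀⁻¹.mulVec ·) h2
    simpa [mulVec_mulVec, ← Matrix.mul_assoc, Matrix.nonsing_inv_mul L₀ hdet] using h3
  -- Step 4: unpack B₁(ζα)
  rw [hB₁ ζα] at hB1w
  rw [Matrix.add_mulVec, Matrix.one_mulVec, smul_mulVec, vecMulVec_mulVec'] at hB1w
  refine ⟨-((((z₁ - ζα) / (ζα - z₁)) / (dα ⬝ᵥ a₁)) * (Matrix.vecMul dα L₀ ⬝ᵥ w)), ?_⟩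
  have := eq_neg_of_add_eq_zero_left hB1w
  rw [neg_smul, ← smul_smul]
  exact this
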